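/- arXiv:0809.4734 — 4 statements merged into one kernel-verified Lean document; each statement's English description precedes it below -/
import Mathlib

section
/- Let G be an infinite abelian profinite group that is a torsion group (every element has finite order). Then the set of closed subgroups of G has cardinality at least 2^{ℵ₀}. -/
open scoped Pointwise

universe u

/-- A topological isomorphism between topological groups: a group isomorphism which is
also a homeomorphism. -/
def TopIso (G : Type*) (H : Type*) [Group G] [TopologicalSpace G] [Group H]
    [TopologicalSpace H] : Prop :=
  ∃ e : G ≃* H, Continuous e ∧ Continuous e.symm

/-- The set of closed subgroups of a topological group `G`. -/
def ClosedSubgroupSpace (G : Type u) [Group G] [TopologicalSpace G] : Type u :=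
  {H : Subgroup G // IsClosed (H : Set G)}

/-- The subgroup-space topology on the set of closed subgroups: for each closed subgroup `H`
the sets `B(H,N) = {K closed | KN = HN}`, as `N` ranges over open normal subgroups of `G`,
form a base of neighbourhoods of `H`. -/
instance ClosedSubgroupSpace.instTopologicalSpace (G : Type u) [Group G] [TopologicalSpace G] :
    TopologicalSpace (ClosedSubgroupSpace G) :=
  TopologicalSpace.generateFrom
    {S | ∃ (H : ClosedSubgroupSpace G) (N : Subgroup G), N.Normal ∧ IsOpen (N : Set G) ∧
      S = {K : ClosedSubgroupSpace G |
            (K.1 : Set G) * (N : Set G) = (H.1 : Set G) * (N : Set G)}}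

/-- The set of closed normal subgroups, with the subspace topology from the subgroup space. -/
def NormalClosedSubgroupSpace (G : Type u) [Group G] [TopologicalSpace G] : Type u :=
  {H : ClosedSubgroupSpace G // (H.1 : Subgroup G).Normal}

instance NormalClosedSubgroupSpace.instTopologicalSpace (G : Type u) [Group G]
    [TopologicalSpace G] : TopologicalSpace (NormalClosedSubgroupSpace G) :=
  instTopologicalSpaceSubtype

/-- A topological group is pronilpotent if all of its finite continuous quotients are
nilpotent, i.e. all quotients by open normal subgroups are nilpotent. -/
def IsPronilpotent (G : Type*) [Group G] [TopologicalSpace G] : Prop :=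
  ∀ (N : Subgroup G) [N.Normal], IsOpen (N : Set G) → Group.IsNilpotent (G ⧸ N)

/-- A topological group is pro-`p` if all of its finite continuous quotients are `p`-groups,
i.e. all quotients by open normal subgroups are `p`-groups. -/
def IsProP (p : ℕ) (G : Type*) [Group G] [TopologicalSpace G] : Prop :=
  ∀ (N : Subgroup G) [N.Normal], IsOpen (N : Set G) → IsPGroup p (G ⧸ N)

/-- A topological group is topologically finitely generated if it has a finitely generated
dense subgroup. -/
def IsTopologicallyFG (G : Type*) [Group G] [TopologicalSpace G] [IsTopologicalGroup G] : Prop :=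
  ∃ S : Set G, S.Finite ∧ (Subgroup.closure S).topologicalClosure = ⊤

/-- The Frattini subgroup of a topological group: the intersection of all maximal proper
open subgroups. -/
def frattiniOpen (G : Type*) [Group G] [TopologicalSpace G] : Subgroup G :=
  sInf {M : Subgroup G | IsOpen (M : Set G) ∧ M ≠ ⊤ ∧ ∀ K : Subgroup G, M < K → K = ⊤}

/-- The character of a topological space at a point: the least cardinality of a base of
neighbourhoods of the point. -/
noncomputable def charAt (X : Type u) [TopologicalSpace X] (x : X) : Cardinal.{u} :=
  sInf {c | ∃ B : Set (Set X), Cardinal.mk B = c ∧ (∀ U ∈ B, U ∈ nhds x) ∧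
    ∀ V ∈ nhds x, ∃ U ∈ B, U ⊆ V}

/-- The weight of a topological space: the least cardinality of a base for its topology. -/
noncomputable def tweight (X : Type u) [TopologicalSpace X] : Cardinal.{u} :=
  sInf {c | ∃ B : Set (Set X), Cardinal.mk B = c ∧ TopologicalSpace.IsTopologicalBasis B}

/-!
Since `G` is infinite and profinite, no open subgroup is minimal, so there is a strictly
decreasing sequence of open subgroups `N n`. Choosing `g n ∈ N n \ N (n + 1)`, every binary
sequence `b` singles out a nested sequence of cosets `(∏_{i < n} g i ^ b i) • N n`, whose
intersection is nonempty by compactness; different sequences give disjoint intersections, so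
`#G ≥ 2 ^ ℵ₀`. As `G` is torsion, every `g` lies in the finite, hence closed, subgroup
`zpowers g`, so `#G ≤ #{closed subgroups} * ℵ₀`, which forces `2 ^ ℵ₀ ≤ #{closed subgroups}`.
-/

open Cardinal Pointwise

def selectedPartialProd {M : Type*} [Monoid M] (g : ℕ → M) (b : ℕ → Bool) : ℕ → M
  | 0 => 1
  | n + 1 => selectedPartialProd g b n * cond (b n) (g n) 1

section CantorScheme

variable {G : Type*} [Group G] [TopologicalSpace G] [IsTopologicalGroup G] [CompactSpace G]

theorem continuum_le_mk_of_strictAnti_closedSubgroup {N : ℕ → Subgroup G}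
    (hclosed : ∀ n, IsClosed (N n : Set G)) (hN : StrictAnti N) : 𝔠 ≤ #G := by
  choose g hg_mem hg_not_mem using fun n : ℕ => SetLike.exists_of_lt (hN n.lt_succ_self)
  set w := selectedPartialProd g
  have hstep_mem : ∀ (b : ℕ → Bool) n, cond (b n) (g n) 1 ∈ N n := fun b n => by
    cases b n
    · exact (N n).one_mem
    · exact hg_mem n
  have hnested : ∀ (b : ℕ → Bool) n,
      w b (n + 1) • (N (n + 1) : Set G) ⊆ w b n • (N n : Set G) := by
    intro b n x hx
    rw [mem_leftCoset_iff] at hx ⊢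
    have hx' : (w b n * cond (b n) (g n) 1)⁻¹ * x ∈ N n := hN.antitone n.le_succ hx
    simpa [mul_assoc] using (N n).mul_mem (hstep_mem b n) hx'
  have hnonempty : ∀ b : ℕ → Bool, (⋂ n, w b n • (N n : Set G)).Nonempty := fun b =>
    IsCompact.nonempty_iInter_of_sequence_nonempty_isCompact_isClosed _
      (hnested b) (fun n => ⟨w b n, (mem_leftCoset_iff _).2 (by simp)⟩)
      ((hclosed 0).leftCoset _).isCompact (fun n => (hclosed n).leftCoset _)
  choose x hx using hnonempty
  have hinj : Function.Injective x := by
    intro b b' hbb'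
    -- `x b` lies in the cosets of `w b n * g n ^ b n` and `w b n * g n ^ b' n` modulo `N (n + 1)`.
    have hletter : ∀ n, w b n = w b' n → b n = b' n := by
      intro n hw
      have h₁ := (mem_leftCoset_iff _).1 (Set.mem_iInter.1 (hx b) (n + 1))
      have h₂ := (mem_leftCoset_iff _).1 (Set.mem_iInter.1 (hx b') (n + 1))
      rw [hbb'] at h₁
      have hquot := (N (n + 1)).mul_mem h₂ ((N (n + 1)).inv_mem h₁)
      simp only [w, selectedPartialProd, hw, mul_inv_rev, inv_inv, mul_assoc,
        mul_inv_cancel_left] at hquot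
      have := hg_not_mem n
      cases hb : b n <;> cases hb' : b' n <;> simp_all
    have hword : ∀ n, w b n = w b' n := by
      intro n
      induction n with
      | zero => rfl
      | succ n ih => simp only [w, selectedPartialProd] at ih ⊢; rw [ih, hletter n ih]
    exact funext fun n => hletter n (hword n)
  simpa using lift_mk_le_lift_mk_of_injective hinj

end CantorScheme

section OpenSubgroupChain

variable {G : Type*} [Group G] [TopologicalSpace G] [IsTopologicalGroup G] [CompactSpace G]
  [Infinite G]

theorem OpenSubgroup.ne_bot_of_infinite (H : OpenSubgroup G) : (H : Subgroup G) ≠ ⊥ := by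
  intro hbot
  have hone : ((H : Subgroup G) : Set G) = {1} := by simp [hbot]
  have : DiscreteTopology G := discreteTopology_of_isOpen_singleton_one (hone ▸ H.isOpen)
  have : Finite G := finite_of_compact_of_discrete
  exact not_finite G

variable [TotallyDisconnectedSpace G]

theorem OpenSubgroup.exists_lt (H : OpenSubgroup G) : ∃ K : OpenSubgroup G, K < H := by
  obtain ⟨h, hH, hne⟩ := (H : Subgroup G).bot_or_exists_ne_one.resolve_left H.ne_bot_of_infinite
  obtain ⟨M, hM⟩ := ProfiniteGrp.exist_openNormalSubgroup_sub_open_nhds_of_one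
    isOpen_compl_singleton hne.symm
  refine ⟨H ⊓ M.toOpenSubgroup, inf_le_left.lt_of_ne fun heq => hM ?_ rfl⟩
  have : h ∈ H ⊓ M.toOpenSubgroup := by rw [heq]; exact hH
  exact this.2

theorem OpenSubgroup.exists_strictAnti_seq : ∃ N : ℕ → OpenSubgroup G, StrictAnti N := by
  choose f hf using OpenSubgroup.exists_lt (G := G)
  exact ⟨fun n => f^[n] ⊤, strictAnti_nat_of_succ_lt fun n => by
    simpa only [Function.iterate_succ_apply'] using hf _⟩

end OpenSubgroupChain

theorem mk_le_mk_closedSubgroup_mul_aleph0 {G : Type*} [Group G] [TopologicalSpace G]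
    [T1Space G] (hG : IsMulTorsion G) :
    #G ≤ #{H : Subgroup G | IsClosed (H : Set G)} * ℵ₀ := by
  have hfinite : ∀ g : G, (Subgroup.zpowers g : Set G).Finite :=
    fun g => finite_zpowers.2 (hG g)
  let f : G → {H : Subgroup G | IsClosed (H : Set G)} :=
    fun g => ⟨Subgroup.zpowers g, (hfinite g).isClosed⟩
  refine mk_le_mk_mul_of_mk_preimage_le f fun H => ?_
  rcases (f ⁻¹' {H}).eq_empty_or_nonempty with hempty | ⟨g, hg⟩
  · simp [hempty]
  · have hsub : f ⁻¹' {H} ⊆ Subgroup.zpowers g := fun y hy => by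
      have hy' : Subgroup.zpowers y = Subgroup.zpowers g := congrArg Subtype.val (hy.trans hg.symm)
      exact hy' ▸ Subgroup.mem_zpowers y
    exact ((hfinite g).subset hsub).lt_aleph0.le

theorem statement2_general (G : Type u) [CommGroup G] [TopologicalSpace G] [IsTopologicalGroup G]
    [CompactSpace G] [TotallyDisconnectedSpace G] [Infinite G]
    (h : Monoid.IsTorsion G) :
    2 ^ Cardinal.aleph0 ≤ Cardinal.mk {H : Subgroup G | IsClosed (H : Set G)} := by
  obtain ⟨N, hN⟩ := OpenSubgroup.exists_strictAnti_seq (G := G)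
  have hcontinuum : 𝔠 ≤ #G := continuum_le_mk_of_strictAnti_closedSubgroup
    (N := fun n => (N n : Subgroup G)) (fun n => (N n).isClosed) fun _ _ hmn => hN hmn
  have hbound := (hcontinuum.trans (mk_le_mk_closedSubgroup_mul_aleph0 h)).trans (mul_le_max _ _)
  rw [two_power_aleph0]
  simpa [aleph0_lt_continuum.not_ge] using hbound

/-- An infinite abelian torsion profinite group has at least `2 ^ ℵ₀` closed subgroups. -/
theorem statement2 (G : Type u) [CommGroup G] [TopologicalSpace G] [IsTopologicalGroup G]
    [CompactSpace G] [T2Space G] [TotallyDisconnectedSpace G] [Infinite G]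
    (h : Monoid.IsTorsion G) :
    2 ^ Cardinal.aleph0 ≤ Cardinal.mk {H : Subgroup G | IsClosed (H : Set G)} :=
  statement2_general G h
end

section
/- Let G be a profinite group, let N be a closed normal subgroup of G, and let K be a closed normal subgroup of G with K ≤ N. Suppose that for some prime p, K is topologically isomorphic to Z_p and the quotient group G/N is topologically isomorphic to Z_p. Then the set of closed subgroups of G has cardinality at least 2^{ℵ₀}. -/
open scoped Pointwise

universe u

/-!
Lift the generator `1` of `G/N ≅ ℤ_p` to `g ∈ G`, let `κ : ℤ_p → K` be the isomorphism, and put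
`H_c = closure ⟨g κ(c)⟩` for `c ∈ ℤ_p`. If `H_a = H_b`, then `w = κ(a - b)` lies in `H_a ∩ N`.
Since `H_a` is covered by the finitely many closed sets `H_a^p (g κ(a))^i`, `0 ≤ i < p`, comparing
images in `ℤ_p` shows that every element of `H_a ∩ N` is the `p`-th power of another one, so `w`
is a `p^m`-th power for every `m`. Also `w^(p^n) = κ(p^n (a - b)) → 1`, so in a finite quotient
`Q` of `G` the image of `w` is `u^(p^|Q|)` for some `u` of `p`-power order `≤ |Q| < p^|Q|`; thus
`w = 1`. Hence `c ↦ H_c` is injective, and `ℤ_p` has the cardinality of the continuum.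
-/

open Filter Topology Subgroup

namespace PadicInt

variable {p : ℕ} [Fact p.Prime]

theorem continuum_le_mk : Cardinal.continuum ≤ Cardinal.mk ℤ_[p] := by
  have hball : Cardinal.continuum ≤ Cardinal.mk (Metric.ball (0 : ℚ_[p]) 1) :=
    continuum_le_cardinal_of_isOpen ℚ_[p] Metric.isOpen_ball ⟨0, Metric.mem_ball_self one_pos⟩
  refine hball.trans (Cardinal.mk_le_of_injective (f := fun x => (⟨x, ?_⟩ : ℤ_[p])) ?_)
  · exact (mem_ball_zero_iff.mp x.2).le
  · intro x y hxy
    exact Subtype.ext (Subtype.mk.inj hxy)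

theorem tendsto_prime_pow_nsmul_nhds_zero (c : ℤ_[p]) :
    Tendsto (fun n : ℕ => p ^ n • c) atTop (𝓝 0) := by
  have hp : ‖(p : ℤ_[p])‖ < 1 := by
    rw [norm_p]
    exact inv_lt_one_of_one_lt₀ (by exact_mod_cast (Fact.out : p.Prime).one_lt)
  simpa [nsmul_eq_mul] using (tendsto_pow_atTop_nhds_zero_of_norm_lt_one hp).mul_const c

theorem eq_zero_of_prime_mul_add_eq_zero {c : ℤ_[p]} {i : ℕ} (hi : i < p)
    (h : p * c + i = 0) : i = 0 ∧ c = 0 := by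
  have hi0 : i = 0 := by
    have hmod := congrArg (toZMod (p := p)) h
    simp only [map_add, map_mul, map_natCast, map_zero, ZMod.natCast_self, zero_mul,
      zero_add] at hmod
    exact Nat.eq_zero_of_dvd_of_lt ((ZMod.natCast_eq_zero_iff i p).mp hmod) hi
  subst hi0
  refine ⟨rfl, ?_⟩
  simpa [(Fact.out : p.Prime).ne_zero] using h

end PadicInt

section FiniteGroup

variable {Q : Type*} [Group Q] [Finite Q]

theorem eq_one_of_pow_prime_pow_eq_one_of_pow_card_eq {p : ℕ} (hp : p.Prime) {u z : Q} {n : ℕ}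
    (hz : z ^ p ^ n = 1) (hu : u ^ p ^ Nat.card Q = z) : z = 1 := by
  set M := Nat.card Q
  have hu1 : u ^ p ^ (M + n) = 1 := by rw [pow_add, pow_mul, hu, hz]
  obtain ⟨k, -, hk⟩ := (Nat.dvd_prime_pow hp).mp (orderOf_dvd_of_pow_eq_one hu1)
  have hkM : k ≤ M := by
    have : p ^ k < p ^ M := calc
      p ^ k = orderOf u := hk.symm
      _ ≤ M := Nat.le_of_dvd Nat.card_pos (orderOf_dvd_natCard u)
      _ < p ^ M := Nat.lt_pow_self hp.one_lt
    exact ((Nat.pow_lt_pow_iff_right hp.one_lt).mp this).le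
  rw [← hu, ← orderOf_dvd_iff_pow_eq_one, hk]
  exact pow_dvd_pow p hkM

end FiniteGroup

section CompactGroup

variable {G : Type*} [Group G] [TopologicalSpace G] [IsTopologicalGroup G] [CompactSpace G]
  [T2Space G]

theorem exists_pow_mul_pow_eq_of_mem_topologicalClosure_zpowers (y : G) {n : ℕ} (hn : 0 < n)
    {x : G} (hx : x ∈ (zpowers y).topologicalClosure) :
    ∃ h ∈ (zpowers y).topologicalClosure, ∃ i < n, h ^ n * y ^ i = x := by
  set H := (zpowers y).topologicalClosure
  set S : Set G := ⋃ i ∈ Finset.range n, (fun h => h ^ n * y ^ i) '' H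
  have hS : IsClosed S :=
    Set.Finite.isClosed_biUnion (Finset.range n).finite_toSet fun i _ =>
      ((zpowers y).isClosed_topologicalClosure.isCompact.image
        (by fun_prop : Continuous fun h : G => h ^ n * y ^ i)).isClosed
  have hzpowers : (zpowers y : Set G) ⊆ S := by
    rintro _ ⟨k, rfl⟩
    have hn' : (0 : ℤ) < n := by exact_mod_cast hn
    have hr0 := Int.emod_nonneg k hn'.ne'
    have hr : (k % n).toNat < n := by have := Int.emod_lt_of_pos k hn'; omega
    refine Set.mem_biUnion (Finset.mem_coe.mpr (Finset.mem_range.mpr hr))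
      ⟨y ^ (k / n), le_topologicalClosure _ (zpow_mem_zpowers y _), ?_⟩
    simp only
    rw [← zpow_natCast, ← zpow_natCast y, ← zpow_mul, Int.toNat_of_nonneg hr0, ← zpow_add,
      Int.ediv_mul_add_emod]
  have hxS : x ∈ S := closure_minimal hzpowers hS (topologicalClosure_coe (s := zpowers y) ▸ hx)
  obtain ⟨i, hi, h, hH, rfl⟩ := by simpa [S] using hxS
  exact ⟨h, hH, i, hi, rfl⟩

variable {p : ℕ} [Fact p.Prime]

theorem exists_pow_prime_eq_of_map_eq_one (χ : G →* Multiplicative ℤ_[p]) {y : G}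
    (hy : χ y = Multiplicative.ofAdd 1) {x : G} (hx : x ∈ (zpowers y).topologicalClosure)
    (hχx : χ x = 1) : ∃ h ∈ (zpowers y).topologicalClosure, χ h = 1 ∧ h ^ p = x := by
  obtain ⟨h, hH, i, hi, rfl⟩ :=
    exists_pow_mul_pow_eq_of_mem_topologicalClosure_zpowers y (Fact.out : p.Prime).pos hx
  have hsum : p * (χ h).toAdd + i = 0 := by
    simpa [hy, nsmul_eq_mul] using congrArg Multiplicative.toAdd hχx
  obtain ⟨rfl, hχh⟩ := PadicInt.eq_zero_of_prime_mul_add_eq_zero hi hsum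
  exact ⟨h, hH, hχh, by simp⟩

theorem exists_pow_prime_pow_eq_of_map_eq_one (χ : G →* Multiplicative ℤ_[p]) {y : G}
    (hy : χ y = Multiplicative.ofAdd 1) (m : ℕ) {x : G}
    (hx : x ∈ (zpowers y).topologicalClosure) (hχx : χ x = 1) :
    ∃ h ∈ (zpowers y).topologicalClosure, χ h = 1 ∧ h ^ p ^ m = x := by
  induction m generalizing x with
  | zero => exact ⟨x, hx, hχx, pow_one x⟩
  | succ m ih =>
    obtain ⟨h, hH, hχh, rfl⟩ := exists_pow_prime_eq_of_map_eq_one χ hy hx hχx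
    obtain ⟨u, huH, hχu, rfl⟩ := ih hH hχh
    exact ⟨u, huH, hχu, by rw [pow_succ, pow_mul]⟩

end CompactGroup

section ProfiniteGroup

variable {G : Type*} [Group G] [TopologicalSpace G] [IsTopologicalGroup G] [CompactSpace G]
  [TotallyDisconnectedSpace G] {p : ℕ} [Fact p.Prime]

theorem eq_one_of_forall_exists_pow_prime_pow_eq {w : G} (hpow : ∀ m : ℕ, ∃ u : G, u ^ p ^ m = w)
    (htendsto : Tendsto (fun n : ℕ => w ^ p ^ n) atTop (𝓝 1)) : w = 1 := by
  by_contra hw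
  obtain ⟨V, hV⟩ := ProfiniteGrp.exist_openNormalSubgroup_sub_open_nhds_of_one
    (isOpen_compl_singleton (x := w)) (Ne.symm hw)
  have : Finite (G ⧸ V.toSubgroup) := quotient_finite_of_isOpen _ V.isOpen'
  obtain ⟨n, hn⟩ := (htendsto.eventually (V.isOpen'.mem_nhds V.one_mem)).exists
  obtain ⟨u, hu⟩ := hpow (Nat.card (G ⧸ V.toSubgroup))
  have hw1 : (w : G ⧸ V.toSubgroup) = 1 :=
    eq_one_of_pow_prime_pow_eq_one_of_pow_card_eq (u := (u : G ⧸ V.toSubgroup)) Fact.out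
      (by rw [← QuotientGroup.mk_pow, QuotientGroup.eq_one_iff]; exact hn)
      (by rw [← QuotientGroup.mk_pow, hu])
  exact hV ((QuotientGroup.eq_one_iff w).mp hw1) rfl


theorem injective_topologicalClosure_zpowers_mul (χ : G →* Multiplicative ℤ_[p])
    (κ : Multiplicative ℤ_[p] →* G) (hκ : Continuous κ) (hκinj : Function.Injective κ)
    (hχκ : ∀ c, χ (κ c) = 1) {g : G} (hg : χ g = Multiplicative.ofAdd 1) :
    Function.Injective fun c : ℤ_[p] =>
      (zpowers (g * κ (Multiplicative.ofAdd c))).topologicalClosure := by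
  intro a b hab
  set y := fun c : ℤ_[p] => g * κ (Multiplicative.ofAdd c)
  have hy : ∀ c, y c ∈ (zpowers (y c)).topologicalClosure := fun c =>
    le_topologicalClosure _ (mem_zpowers _)
  have hχy : ∀ c, χ (y c) = Multiplicative.ofAdd 1 := fun c => by simp [y, hg, hχκ]
  set w := κ (Multiplicative.ofAdd (a - b))
  have hw : w = (y b)⁻¹ * y a := by
    simp only [w, y, mul_inv_rev, mul_assoc, inv_mul_cancel_left, ← map_inv, ← map_mul,
      sub_eq_neg_add, ofAdd_add, ofAdd_neg]
  have hwH : w ∈ (zpowers (y a)).topologicalClosure :=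
    hw ▸ mul_mem (inv_mem ((SetLike.ext_iff.mp hab (y b)).mpr (hy b))) (hy a)
  have hpow (m : ℕ) : ∃ u : G, u ^ p ^ m = w := by
    obtain ⟨u, -, -, hu⟩ := exists_pow_prime_pow_eq_of_map_eq_one χ (hχy a) m hwH (hχκ _)
    exact ⟨u, hu⟩
  have htendsto : Tendsto (fun n : ℕ => w ^ p ^ n) atTop (𝓝 1) := by
    have hcont : Continuous fun c : ℤ_[p] => κ (Multiplicative.ofAdd c) :=
      hκ.comp continuous_ofAdd
    have := (hcont.tendsto 0).comp (PadicInt.tendsto_prime_pow_nsmul_nhds_zero (a - b))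
    simpa only [Function.comp_def, ofAdd_nsmul, map_pow, ofAdd_zero, map_one] using this
  have hab0 : Multiplicative.ofAdd (a - b) = 1 :=
    hκinj ((eq_one_of_forall_exists_pow_prime_pow_eq hpow htendsto).trans (map_one κ).symm)
  exact sub_eq_zero.mp (ofAdd_eq_one.mp hab0)

end ProfiniteGroup

theorem statement3_general (G : Type u) [Group G] [TopologicalSpace G] [IsTopologicalGroup G]
    [CompactSpace G] [T2Space G] [TotallyDisconnectedSpace G]
    (N K : Subgroup G) [N.Normal] (hKN : K ≤ N)
    (p : ℕ) (hp : p.Prime)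
    (hK : TopIso K (Multiplicative (@PadicInt p ⟨hp⟩)))
    (hGN : TopIso (G ⧸ N) (Multiplicative (@PadicInt p ⟨hp⟩))) :
    2 ^ Cardinal.aleph0 ≤ Cardinal.mk {H : Subgroup G | IsClosed (H : Set G)} := by
  have : Fact p.Prime := ⟨hp⟩
  obtain ⟨eK, -, heK⟩ := hK
  obtain ⟨eQ, -, -⟩ := hGN
  let χ : G →* Multiplicative ℤ_[p] := eQ.toMonoidHom.comp (QuotientGroup.mk' N)
  let κ : Multiplicative ℤ_[p] →* G := K.subtype.comp eK.symm.toMonoidHom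
  have hχκ (c) : χ (κ c) = 1 := by
    simp [χ, κ, (QuotientGroup.eq_one_iff _).mpr (hKN (eK.symm c).2)]
  obtain ⟨g, hg⟩ := QuotientGroup.mk'_surjective N (eQ.symm (Multiplicative.ofAdd 1))
  have hinj := injective_topologicalClosure_zpowers_mul χ κ (continuous_subtype_val.comp heK)
    (Subtype.val_injective.comp eK.symm.injective) hχκ (g := g)
    (by simp only [χ, MonoidHom.comp_apply, MulEquiv.coe_toMonoidHom, hg,
      MulEquiv.apply_symm_apply])
  let F (c : ℤ_[p]) : {H : Subgroup G | IsClosed (H : Set G)} :=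
    ⟨(zpowers (g * κ (Multiplicative.ofAdd c))).topologicalClosure,
      isClosed_topologicalClosure _⟩
  have hF : Function.Injective F := fun a b hab => hinj (congrArg Subtype.val hab)
  calc 2 ^ Cardinal.aleph0 = Cardinal.lift.{u} Cardinal.continuum := by
        rw [Cardinal.lift_continuum, Cardinal.two_power_aleph0]
    _ ≤ Cardinal.lift.{u} (Cardinal.mk ℤ_[p]) := Cardinal.lift_le.mpr PadicInt.continuum_le_mk
    _ ≤ Cardinal.mk {H : Subgroup G | IsClosed (H : Set G)} := by
        simpa only [Cardinal.lift_id'] using Cardinal.lift_mk_le_lift_mk_of_injective hF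

/-- Let `G` be a profinite group, `N` a closed normal subgroup of `G` and `K ≤ N` a closed
normal subgroup of `G`.  If, for some prime `p`, both `K` and `G/N` are topologically
isomorphic to `ℤ_p`, then `G` has at least `2 ^ ℵ₀` closed subgroups. -/
theorem statement3 (G : Type u) [Group G] [TopologicalSpace G] [IsTopologicalGroup G]
    [CompactSpace G] [T2Space G] [TotallyDisconnectedSpace G]
    (N K : Subgroup G) [N.Normal] [K.Normal]
    (hNc : IsClosed (N : Set G)) (hKc : IsClosed (K : Set G)) (hKN : K ≤ N)
    (p : ℕ) (hp : p.Prime)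
    (hK : TopIso K (Multiplicative (@PadicInt p ⟨hp⟩)))
    (hGN : TopIso (G ⧸ N) (Multiplicative (@PadicInt p ⟨hp⟩))) :
    2 ^ Cardinal.aleph0 ≤ Cardinal.mk {H : Subgroup G | IsClosed (H : Set G)} :=
  statement3_general G N K hKN p hp hK hGN
end

section
/- Let G be a topologically finitely generated profinite group whose commutator subgroup G′ is finite. Then the center Z(G) of G is an open (normal) subgroup of G. -/
/-!
Every conjugate `x g x⁻¹ = ⁅x, g⁆ g` of `g` lies in the finite set `G′ g`, so `x ↦ x g x⁻¹` is a
continuous map with finite image into a T1 space and its fibre over `g`, the centralizer of `g`, is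
open. Centralizers are closed, so if `S` is a finite set generating a dense subgroup, the centre is
the centralizer of `S`: a finite intersection of open subgroups.
-/

open scoped Pointwise

universe u

open Set
open scoped commutatorElement

theorem Continuous.isOpen_preimage_singleton_of_finite_range {X Y : Type*} [TopologicalSpace X]
    [TopologicalSpace Y] [T1Space Y] {f : X → Y} (hf : Continuous f) (hfin : (range f).Finite)
    (y : Y) : IsOpen (f ⁻¹' {y}) := by
  have hcompl : (f ⁻¹' {y})ᶜ = f ⁻¹' (range f \ {y}) := by
    ext x
    simp
  rw [← isClosed_compl_iff, hcompl]
  exact hfin.sdiff.isClosed.preimage hf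

namespace Subgroup

variable {G : Type*} [Group G]

theorem finite_conjugatesOf_of_finite_commutator (hcomm : (_root_.commutator G : Set G).Finite)
    (g : G) : (conjugatesOf g).Finite := by
  refine (hcomm.image (· * g)).subset fun b hb ↦ ?_
  obtain ⟨x, rfl⟩ := isConj_iff.mp hb
  exact ⟨⁅x, g⁆, commutator_mem_commutator (mem_top x) (mem_top g), by group⟩

variable [TopologicalSpace G] [IsTopologicalGroup G]

theorem isOpen_centralizer_singleton [T1Space G] {g : G} (hg : (conjugatesOf g).Finite) :
    IsOpen (centralizer {g} : Set G) := by
  have hrange : range (fun x : G ↦ x * g * x⁻¹) = conjugatesOf g := by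
    ext b
    exact isConj_iff.symm
  have hfibre : (centralizer {g} : Set G) = (fun x : G ↦ x * g * x⁻¹) ⁻¹' {g} := by
    ext x
    simp [mem_centralizer_singleton_iff, mul_inv_eq_iff_eq_mul]
  rw [hfibre]
  exact (by fun_prop : Continuous fun x : G ↦ x * g * x⁻¹).isOpen_preimage_singleton_of_finite_range
    (hrange ▸ hg) g

theorem isOpen_centralizer_of_finite [T1Space G] {S : Set G} (hS : S.Finite)
    (hconj : ∀ g ∈ S, (conjugatesOf g).Finite) : IsOpen (centralizer S : Set G) := by
  rw [centralizer_eq_iInf]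
  simp only [coe_iInf]
  exact hS.isOpen_biInter fun g hg ↦ isOpen_centralizer_singleton (hconj g hg)

theorem center_eq_centralizer_of_dense_closure [T2Space G] {S : Set G}
    (hS : (closure S).topologicalClosure = ⊤) : center G = centralizer S := by
  refine le_antisymm (center_le_centralizer S) fun x hx ↦ ?_
  have hclosure : closure S ≤ centralizer {x} :=
    (closure_le _).mpr fun s hs ↦ mem_centralizer_singleton_iff.mpr (mem_centralizer_iff.mp hx s hs)
  have htop : ⊤ ≤ centralizer {x} :=
    hS ▸ topologicalClosure_minimal _ hclosure (Set.isClosed_centralizer _)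
  exact mem_center_iff.mpr fun g ↦ mem_centralizer_singleton_iff.mp (htop (mem_top g))

end Subgroup

theorem statement6_general (G : Type u) [Group G] [TopologicalSpace G] [IsTopologicalGroup G]
    [T2Space G]
    (hfg : IsTopologicallyFG G) (hcomm : (commutator G : Set G).Finite) :
    IsOpen ((Subgroup.center G : Subgroup G) : Set G) := by
  obtain ⟨S, hS, hdense⟩ := hfg
  rw [Subgroup.center_eq_centralizer_of_dense_closure hdense]
  exact Subgroup.isOpen_centralizer_of_finite hS fun g _ ↦
    Subgroup.finite_conjugatesOf_of_finite_commutator hcomm g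

/-- If `G` is a topologically finitely generated profinite group whose commutator subgroup
is finite, then the center of `G` is open in `G`. -/
theorem statement6 (G : Type u) [Group G] [TopologicalSpace G] [IsTopologicalGroup G]
    [CompactSpace G] [T2Space G] [TotallyDisconnectedSpace G]
    (hfg : IsTopologicallyFG G) (hcomm : (commutator G : Set G).Finite) :
    IsOpen ((Subgroup.center G : Subgroup G) : Set G) :=
  statement6_general G hfg hcomm
end

section
/- Let G be a profinite group having a central open subgroup N such that N = N_1 × ⋯ × N_k (an internal direct product), where p_1, …, p_k are pairwise distinct primes (k ≥ 1) and, for each i, N_i is a procyclic pro-p_i group. Then for every closed subgroup H of G, the set {K : K is a closed subgroup of G and K ∩ N = H ∩ N} is finite. -/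
open scoped Pointwise

universe u

/-!
Let `M = H ⊓ N` and `m = [G : N]`. A closed subgroup `K` with `K ⊓ N = M` contains `M`, so it
is determined by its image in `G ⧸ M`, and all its elements satisfy `g ^ m ∈ M`; it therefore
suffices that such elements meet only finitely many cosets of `M`. As `N` is central of finite
index, this reduces to the `m`-torsion of `N ⧸ M`. Now `N` is topologically generated by `k`
commuting elements, so in every finite quotient `G ⧸ (M ⊔ U)` the image of `N` is an abelian
group on `k` generators, whose `m`-torsion has at most `m ^ k` elements: it is as large as the
quotient by `m`-th powers, an abelian group of exponent dividing `m` on `k` generators. Open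
normal subgroups separate finitely many cosets of the closed subgroup `M`, so the `m`-torsion
of `N ⧸ M` has at most `m ^ k` elements.
-/

theorem CommGroup.card_ker_powMonoidHom_le {A : Type*} [CommGroup A] [Finite A] {m : ℕ}
    (hm : 0 < m) : Nat.card (powMonoidHom m : A →* A).ker ≤ m ^ Group.rank A := by
  set φ : A →* A := powMonoidHom m
  have hker : Nat.card φ.ker = φ.range.index := by
    have h1 := φ.ker.card_mul_index
    have h2 := φ.range.card_mul_index
    rw [Subgroup.index_ker] at h1
    exact Nat.eq_of_mul_eq_mul_right Nat.card_pos (h1.trans (h2.symm.trans (mul_comm _ _)))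
  have hexp : ∀ q : A ⧸ φ.range, q ^ m = 1 := by
    rintro ⟨a⟩
    exact (QuotientGroup.eq_one_iff _).mpr ⟨a, rfl⟩
  calc Nat.card φ.ker = Nat.card (A ⧸ φ.range) := hker
    _ ≤ m ^ Group.rank (A ⧸ φ.range) :=
      Nat.le_of_dvd (by positivity) (card_dvd_exponent_pow_rank' _ hexp)
    _ ≤ m ^ Group.rank A :=
      Nat.pow_le_pow_right hm (Group.rank_le_of_surjective _ (QuotientGroup.mk'_surjective _))

namespace Subgroup

open scoped IsMulCommutative in
theorem ncard_setOf_mem_closure_pow_eq_one_le {A : Type*} [Group A] [Finite A]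
    {s : Set A} (hs : ∀ x ∈ s, ∀ y ∈ s, x * y = y * x) {m : ℕ} (hm : 0 < m) :
    {a | a ∈ closure s ∧ a ^ m = 1}.ncard ≤ m ^ s.ncard := by
  have := isMulCommutative_closure hs
  have hset : {a | a ∈ closure s ∧ a ^ m = 1} =
      Subtype.val '' ((powMonoidHom m : closure s →* closure s).ker : Set (closure s)) := by
    ext a
    constructor
    · rintro ⟨ha, ham⟩
      exact ⟨⟨a, ha⟩, Subtype.ext ham, rfl⟩
    · rintro ⟨b, hb, rfl⟩
      exact ⟨b.2, congrArg Subtype.val hb⟩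
  calc {a | a ∈ closure s ∧ a ^ m = 1}.ncard
      = Nat.card (powMonoidHom m : closure s →* closure s).ker := by
        rw [hset, Set.ncard_image_of_injective _ Subtype.val_injective, ← Nat.card_coe_set_eq]
        rfl
    _ ≤ m ^ Group.rank (closure s) := CommGroup.card_ker_powMonoidHom_le hm
    _ ≤ m ^ s.ncard := by
      refine Nat.pow_le_pow_right hm ?_
      simpa only [Nat.card_coe_set_eq] using rank_closure_finite_le_nat_card s

theorem normal_of_le_center {G : Type*} [Group G] {H : Subgroup G} (h : H ≤ center G) :
    H.Normal :=
  ⟨fun n hn g => by rwa [mem_center_iff.mp (h hn) g, mul_inv_cancel_right]⟩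

theorem le_topologicalClosure_zpowers_coe {G : Type*} [Group G] [TopologicalSpace G]
    [IsTopologicalGroup G] {L : Subgroup G} {x : L} (hx : (zpowers x).topologicalClosure = ⊤) :
    L ≤ (zpowers (x : G)).topologicalClosure := by
  intro y hy
  have hy' : (⟨y, hy⟩ : L) ∈ _root_.closure (zpowers x : Set L) := by
    rw [← topologicalClosure_coe, hx]
    trivial
  refine map_mem_closure continuous_subtype_val hy' ?_
  rintro _ ⟨n, rfl⟩
  exact ⟨n, by simp⟩

theorem finite_setOf_le_and_subset {G : Type*} [Group G] {M : Subgroup G} {P : Set G}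
    (hP : ((QuotientGroup.mk : G → G ⧸ M) '' P).Finite) :
    {K : Subgroup G | M ≤ K ∧ (K : Set G) ⊆ P}.Finite := by
  have hle : ∀ K₁ K₂ : Subgroup G, M ≤ K₂ →
      (QuotientGroup.mk : G → G ⧸ M) '' K₁ ⊆ QuotientGroup.mk '' K₂ →
      K₁ ≤ K₂ := by
    intro K₁ K₂ hM h x hx
    obtain ⟨y, hy, hyx⟩ := h ⟨x, hx, rfl⟩
    simpa using K₂.mul_mem hy (hM (QuotientGroup.eq.mp hyx))
  refine Set.Finite.of_finite_image
    (f := fun K : Subgroup G => (QuotientGroup.mk : G → G ⧸ M) '' K)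
    (hP.finite_subsets.subset ?_) fun K₁ h₁ K₂ h₂ h =>
      le_antisymm (hle _ _ h₂.1 h.le) (hle _ _ h₁.1 h.ge)
  rintro _ ⟨K, hK, rfl⟩
  exact Set.image_mono hK.2

end Subgroup

theorem QuotientGroup.mk_mem_closure_image_of_mem_topologicalClosure {G : Type*} [Group G]
    [TopologicalSpace G] [IsTopologicalGroup G] {V : Subgroup G} [V.Normal]
    (hV : IsOpen (V : Set G)) {s : Set G} {x : G}
    (hx : x ∈ (Subgroup.closure s).topologicalClosure) :
    (x : G ⧸ V) ∈ Subgroup.closure ((QuotientGroup.mk : G → G ⧸ V) '' s) := by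
  set W :=
    (Subgroup.closure ((QuotientGroup.mk : G → G ⧸ V) '' s)).comap (QuotientGroup.mk' V)
  have hVW : V ≤ W := fun v hv => by
    simp [W, (QuotientGroup.eq_one_iff v).mpr hv]
  have hsW : Subgroup.closure s ≤ W :=
    (Subgroup.closure_le W).mpr fun y hy => Subgroup.subset_closure ⟨y, hy, rfl⟩
  exact (Subgroup.closure s).topologicalClosure_minimal hsW
    (W.isClosed_of_isOpen (Subgroup.isOpen_mono hVW hV)) hx

section Profinite

variable {G : Type*} [Group G] [TopologicalSpace G] [IsTopologicalGroup G] [CompactSpace G]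
  [TotallyDisconnectedSpace G]

theorem exists_openNormalSubgroup_injOn_mk_sup {M : Subgroup G} (hM : IsClosed (M : Set G))
    {R : Set G} (hR : R.Finite) (hinj : R.InjOn (QuotientGroup.mk : G → G ⧸ M)) :
    ∃ U : OpenNormalSubgroup G,
      R.InjOn (QuotientGroup.mk : G → G ⧸ (M ⊔ U.toSubgroup)) := by
  set D : Set G := (fun x : G × G => x.1⁻¹ * x.2) '' (R ×ˢ R) \ M
  set W : Set G := ⋂ d ∈ D, {u | d * u⁻¹ ∉ M}
  have hW : IsOpen W :=
    ((hR.prod hR).image _).sdiff.isOpen_biInter fun d _ =>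
      hM.isOpen_compl.preimage (by fun_prop)
  have h1W : (1 : G) ∈ W := Set.mem_iInter₂.mpr fun d hd => by simpa using hd.2
  obtain ⟨U, hU⟩ := ProfiniteGrp.exist_openNormalSubgroup_sub_open_nhds_of_one hW h1W
  refine ⟨U, fun a ha b hb hab => hinj ha hb ?_⟩
  rw [QuotientGroup.eq, ← SetLike.mem_coe, Subgroup.mul_normal] at hab
  obtain ⟨y, hy, u, hu, hyu⟩ := hab
  rw [QuotientGroup.eq]
  by_contra hab'
  refine Set.mem_iInter₂.mp (hU hu) (a⁻¹ * b) ⟨⟨(a, b), ⟨ha, hb⟩, rfl⟩, hab'⟩ ?_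
  rwa [← hyu, mul_inv_cancel_right]

theorem finite_image_mk_setOf_mem_topologicalClosure_pow_mem {M : Subgroup G} [M.Normal]
    (hM : IsClosed (M : Set G)) {s : Set G} (hs : s.Finite)
    (hcomm : ∀ x ∈ s, ∀ y ∈ s, x * y = y * x) {m : ℕ} (hm : 0 < m) :
    ((QuotientGroup.mk : G → G ⧸ M) ''
      {x | x ∈ (Subgroup.closure s).topologicalClosure ∧ x ^ m ∈ M}).Finite := by
  set X := {x | x ∈ (Subgroup.closure s).topologicalClosure ∧ x ^ m ∈ M}
  suffices hbound :
      ∀ t ⊆ (QuotientGroup.mk : G → G ⧸ M) '' X, t.Finite → t.ncard ≤ m ^ s.ncard by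
    by_contra hinf
    obtain ⟨t, hts, htfin, htcard⟩ := Set.Infinite.exists_subset_ncard_eq hinf (m ^ s.ncard + 1)
    have := hbound t hts htfin
    omega
  intro t hts htfin
  obtain ⟨R, hRX, hRinj, hRt⟩ := Set.SurjOn.exists_subset_injOn_image_eq hts
  obtain ⟨U, hU⟩ :=
    exists_openNormalSubgroup_injOn_mk_sup hM (Set.Finite.of_finite_image (hRt ▸ htfin) hRinj)
      hRinj
  set V := M ⊔ U.toSubgroup
  have hVopen : IsOpen (V : Set G) := Subgroup.isOpen_mono le_sup_right U.isOpen
  have : Finite (G ⧸ V) := V.quotient_finite_of_isOpen hVopen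
  set s' := (QuotientGroup.mk : G → G ⧸ V) '' s
  have hmaps : Set.MapsTo (QuotientGroup.mk : G → G ⧸ V) R
      {q | q ∈ Subgroup.closure s' ∧ q ^ m = 1} :=
    fun x hx => ⟨QuotientGroup.mk_mem_closure_image_of_mem_topologicalClosure hVopen (hRX hx).1,
      by
        rw [← QuotientGroup.mk_pow, QuotientGroup.eq_one_iff]
        exact (le_sup_left : M ≤ V) (hRX hx).2⟩
  have hcomm' : ∀ p ∈ s', ∀ q ∈ s', p * q = q * p := by
    rintro _ ⟨x, hx, rfl⟩ _ ⟨y, hy, rfl⟩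
    rw [← QuotientGroup.mk_mul, ← QuotientGroup.mk_mul, hcomm x hx y hy]
  calc t.ncard = R.ncard := by rw [← hRt, hRinj.ncard_image]
    _ = ((QuotientGroup.mk : G → G ⧸ V) '' R).ncard := hU.ncard_image.symm
    _ ≤ {q | q ∈ Subgroup.closure s' ∧ q ^ m = 1}.ncard :=
      Set.ncard_le_ncard hmaps.image_subset
    _ ≤ m ^ s'.ncard := Subgroup.ncard_setOf_mem_closure_pow_eq_one_le hcomm' hm
    _ ≤ m ^ s.ncard := Nat.pow_le_pow_right hm (Set.ncard_image_le hs)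

end Profinite

theorem finite_image_mk_setOf_pow_mem_of_le_center {G : Type*} [Group G] {M N : Subgroup G}
    [Finite (G ⧸ N)] (hN : N ≤ Subgroup.center G) {e : ℕ}
    (h : ((QuotientGroup.mk : G → G ⧸ M) '' {x | x ∈ N ∧ x ^ e ∈ M}).Finite) :
    ((QuotientGroup.mk : G → G ⧸ M) '' {x | x ^ e ∈ M}).Finite := by
  obtain ⟨R, hRP, hRinj, hRimg⟩ := Set.SurjOn.exists_subset_injOn_image_eq
    (Set.surjOn_image (QuotientGroup.mk : G → G ⧸ N) {x | x ^ e ∈ M})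
  have hRfin : R.Finite := Set.Finite.of_finite_image (hRimg ▸ Set.toFinite _) hRinj
  refine (hRfin.biUnion fun r _ => h.image (r • ·)).subset ?_
  rintro _ ⟨g, hg, rfl⟩
  obtain ⟨r, hr, hrg⟩ : ∃ r ∈ R, (r : G ⧸ N) = g := by
    rw [← Set.mem_image, hRimg]
    exact ⟨g, hg, rfl⟩
  have hn : r⁻¹ * g ∈ N := QuotientGroup.eq.mp hrg
  have hpow : (r⁻¹ * g) ^ e = (r ^ e)⁻¹ * g ^ e := by
    have hcomm : Commute r (r⁻¹ * g) := Subgroup.mem_center_iff.mp (hN hn) r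
    rw [eq_inv_mul_iff_mul_eq, ← hcomm.mul_pow, mul_inv_cancel_left]
  refine Set.mem_biUnion hr
    ⟨_, ⟨r⁻¹ * g, ⟨hn, ?_⟩, rfl⟩, by simp [MulAction.Quotient.smul_mk]⟩
  rw [hpow]
  exact M.mul_mem (M.inv_mem (hRP hr)) hg

theorem statement8_general (G : Type u) [Group G] [TopologicalSpace G] [IsTopologicalGroup G]
    [CompactSpace G] [TotallyDisconnectedSpace G]
    (k : ℕ)
    (N : Subgroup G) (Ni : Fin k → Subgroup G)
    (hprod : iSupIndep Ni ∧ (⨆ i, Ni i) = N)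
    (hcentral : N ≤ Subgroup.center G) (hNopen : IsOpen (N : Set G))
    (hprocyclic : ∀ i, ∃ x : (Ni i), (Subgroup.zpowers x).topologicalClosure = ⊤)
    (H : Subgroup G) (hH : IsClosed (H : Set G)) :
    {K : Subgroup G | IsClosed (K : Set G) ∧ K ⊓ N = H ⊓ N}.Finite := by
  obtain ⟨-, hsup⟩ := hprod
  choose x hx using hprocyclic
  set s := Set.range fun i => (x i : G)
  have hsN : s ⊆ N := by
    rintro _ ⟨i, rfl⟩
    exact hsup ▸ Subgroup.mem_iSup_of_mem i (x i).2
  have hNs : N ≤ (Subgroup.closure s).topologicalClosure := hsup ▸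
    iSup_le fun i => (Subgroup.le_topologicalClosure_zpowers_coe (hx i)).trans
      (Subgroup.topologicalClosure_mono
        (Subgroup.zpowers_le.mpr (Subgroup.subset_closure ⟨i, rfl⟩)))
  have hcomm : ∀ a ∈ s, ∀ b ∈ s, a * b = b * a := fun a _ b hb =>
    Subgroup.mem_center_iff.mp (hcentral (hsN hb)) a
  have : N.Normal := Subgroup.normal_of_le_center hcentral
  have : (H ⊓ N).Normal := Subgroup.normal_of_le_center (inf_le_right.trans hcentral)
  have : Finite (G ⧸ N) := N.quotient_finite_of_isOpen hNopen
  have hP := finite_image_mk_setOf_pow_mem_of_le_center hcentral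
    ((finite_image_mk_setOf_mem_topologicalClosure_pow_mem (M := H ⊓ N)
      (hH.inter (N.isClosed_of_isOpen hNopen)) (Set.finite_range _) hcomm
      (Nat.pos_of_ne_zero (Subgroup.index_ne_zero_of_finite (H := N)))).subset
        (Set.image_mono fun y hy => ⟨hNs hy.1, hy.2⟩))
  refine (Subgroup.finite_setOf_le_and_subset hP).subset ?_
  rintro K ⟨-, hK⟩
  exact ⟨hK ▸ inf_le_left, fun y hy => hK ▸ ⟨pow_mem hy _, N.pow_index_mem y⟩⟩

/-- Let `G` be a profinite group with a central open subgroup `N` which is the internal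
direct product of subgroups `N 1, …, N k`, where the `p i` are pairwise distinct primes and
each `N i` is a closed procyclic pro-`p i` subgroup.  Then for every closed subgroup `H` of
`G`, the set of closed subgroups `K` of `G` with `K ⊓ N = H ⊓ N` is finite. -/
theorem statement8 (G : Type u) [Group G] [TopologicalSpace G] [IsTopologicalGroup G]
    [CompactSpace G] [T2Space G] [TotallyDisconnectedSpace G]
    (k : ℕ) (hk : 1 ≤ k) (p : Fin k → ℕ) (hp : ∀ i, (p i).Prime)
    (hinj : Function.Injective p)
    (N : Subgroup G) (Ni : Fin k → Subgroup G)
    (hprod : iSupIndep Ni ∧ (⨆ i, Ni i) = N)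
    (hcentral : N ≤ Subgroup.center G) (hNopen : IsOpen (N : Set G))
    (hclosed : ∀ i, IsClosed ((Ni i : Subgroup G) : Set G))
    (hprocyclic : ∀ i, ∃ x : (Ni i), (Subgroup.zpowers x).topologicalClosure = ⊤)
    (hproP : ∀ i, IsProP (p i) (Ni i))
    (H : Subgroup G) (hH : IsClosed (H : Set G)) :
    {K : Subgroup G | IsClosed (K : Set G) ∧ K ⊓ N = H ⊓ N}.Finite :=
  statement8_general G k N Ni hprod hcentral hNopen hprocyclic H hH
end
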